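/- arXiv:1803.10504 — 2 statements merged into one kernel-verified Lean document; each statement's English description precedes it below -/
import Mathlib

section
/- Let F(X) be a free group on the set X (free in a variety M containing a nontrivial group), (X, E) a coarse space, and suppose some group coarse structure on F(X) restricts to E on X. Let 𝔉 be the (nonempty) family of all group coarse structures T on F(X) with T|_X = E, and T′ = ⋂𝔉. Then T′ is a group coarse structure on F(X) with T′|_X = E, and every coarse map f : (X,E) → (G, E″) into a coarse group G ∈ M extends to a coarse homomorphism (F(X), T′) → (G, E″). In particular the free coarse group over (X,E) exists and is unique. -/
/-- A *coarse structure* on `X`: every entourage contains the diagonal, and the family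
is closed under composition, inversion, and passing to subsets containing the diagonal. -/
def IsCoarseStructure {X : Type*} (E : Set (Set (X × X))) : Prop :=
  (∀ ε ∈ E, ∀ x : X, (x, x) ∈ ε) ∧
  (∀ ε ∈ E, ∀ δ ∈ E, {p : X × X | ∃ z : X, (p.1, z) ∈ ε ∧ (z, p.2) ∈ δ} ∈ E) ∧
  (∀ ε ∈ E, {p : X × X | (p.2, p.1) ∈ ε} ∈ E) ∧
  (∀ ε ∈ E, ∀ ε' ⊆ ε, (∀ x : X, (x, x) ∈ ε') → ε' ∈ E)

/-- A family `I` of subsets of a group `G` is a *group ideal*. -/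
def IsGroupIdeal {G : Type*} [Group G] (I : Set (Set G)) : Prop :=
  (∀ A ∈ I, ∀ B ⊆ A, B ∈ I) ∧
  (∀ A ∈ I, ∀ B ∈ I, A ∪ B ∈ I) ∧
  (∀ A : Set G, A.Finite → A ∈ I) ∧
  (∀ A ∈ I, ∀ B ∈ I, {x : G | ∃ a ∈ A, ∃ b ∈ B, x = a * b⁻¹} ∈ I)

/-- The entourage `ε_A = {(x, g•x) : x ∈ X, g ∈ A}` determined by `A ⊆ G`. -/
def entourageOf {G X : Type*} [Group G] [MulAction G X] (A : Set G) : Set (X × X) :=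
  {p : X × X | ∃ g ∈ A, p.2 = g • p.1}

/-- The coarse structure `E(G, I, X)` induced on a `G`-space `X` by a group ideal `I`:
all diagonal-containing subsets of some `ε_A` with `A ∈ I`, `1 ∈ A`. -/
def actionCoarse (G : Type*) [Group G] (I : Set (Set G)) (X : Type*) [MulAction G X] :
    Set (Set (X × X)) :=
  {ε | (∀ x : X, (x, x) ∈ ε) ∧ ∃ A ∈ I, (1 : G) ∈ A ∧ ε ⊆ entourageOf A}

/-- `E_I`: the coarse structure on `G` induced by the left action of `G` on itself. -/
def idealCoarse {G : Type*} [Group G] (I : Set (Set G)) : Set (Set (G × G)) :=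
  actionCoarse G I G

/-- The ball `B(x, ε)`. -/
def ball {X : Type*} (ε : Set (X × X)) (x : X) : Set X := {y : X | (x, y) ∈ ε}


/-- `f` is a *coarse (bornologous) mapping* from `(X, EX)` to `(Y, EY)`. -/
def IsCoarseMap {X Y : Type*} (EX : Set (Set (X × X))) (EY : Set (Set (Y × Y)))
    (f : X → Y) : Prop :=
  ∀ ε ∈ EX, ∃ δ ∈ EY, ∀ p ∈ ε, (f p.1, f p.2) ∈ δ

/-- The product coarse structure on `X × Y`, with base the componentwise products of
entourages. -/
def prodCoarse {X Y : Type*} (EX : Set (Set (X × X))) (EY : Set (Set (Y × Y))) :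
    Set (Set ((X × Y) × (X × Y))) :=
  {η | (∀ q : X × Y, (q, q) ∈ η) ∧ ∃ ε ∈ EX, ∃ δ ∈ EY,
    η ⊆ {p : (X × Y) × (X × Y) | (p.1.1, p.2.1) ∈ ε ∧ (p.1.2, p.2.2) ∈ δ}}

/-- `(G, E)` is a *coarse group*: the multiplication and inversion are coarse maps. -/
def IsCoarseGroup {G : Type*} [Group G] (E : Set (Set (G × G))) : Prop :=
  IsCoarseMap (prodCoarse E E) E (fun p => p.1 * p.2) ∧
  IsCoarseMap E E (fun x : G => x⁻¹)

/-- `(G, E)` is a *left coarse group*. -/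
def IsLeftCoarseGroup {G : Type*} [Group G] (E : Set (Set (G × G))) : Prop :=
  ∀ ε ∈ E, ∃ ε' ∈ E, ∀ g x y : G, (x, y) ∈ ε → (g * x, g * y) ∈ ε'

/-- `(G, E)` is a *right coarse group*. -/
def IsRightCoarseGroup {G : Type*} [Group G] (E : Set (Set (G × G))) : Prop :=
  ∀ ε ∈ E, ∃ ε' ∈ E, ∀ g x y : G, (x, y) ∈ ε → (x * g, y * g) ∈ ε'

/-- A coarse structure is *connected* if any two points are related by some entourage. -/
def IsConnectedCoarse {X : Type*} (E : Set (Set (X × X))) : Prop :=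
  ∀ x y : X, ∃ ε ∈ E, (x, y) ∈ ε

/-- A group ideal `I` is *invariant* if `⋃_{g ∈ G} g⁻¹ A g ∈ I` for each `A ∈ I`. -/
def IsInvariantIdeal {G : Type*} [Group G] (I : Set (Set G)) : Prop :=
  ∀ A ∈ I, {x : G | ∃ g : G, ∃ a ∈ A, x = g⁻¹ * a * g} ∈ I

/-- The subspace coarse structure induced on a subset `Y ⊆ F`. -/
def restrictCoarse {F : Type*} (E : Set (Set (F × F))) (Y : Set F) :
    Set (Set (Y × Y)) :=
  {s | ∃ ε ∈ E, s = {q : Y × Y | ((q.1 : F), (q.2 : F)) ∈ ε}}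

section FreeCoarseAux

variable {F : Type*}

lemma sInter_coarseStructure' (S : Set (Set (Set (F × F)))) (hne : S.Nonempty)
    (h : ∀ T ∈ S, IsCoarseStructure T) : IsCoarseStructure (⋂₀ S) := by
  obtain ⟨T₀, hT₀⟩ := hne
  refine ⟨?_, ?_, ?_, ?_⟩
  · intro ε hε x
    exact (h T₀ hT₀).1 ε (Set.mem_sInter.mp hε T₀ hT₀) x
  · intro ε hε δ hδ
    exact Set.mem_sInter.mpr fun T hT =>
      (h T hT).2.1 ε (Set.mem_sInter.mp hε T hT) δ (Set.mem_sInter.mp hδ T hT)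
  · intro ε hε
    exact Set.mem_sInter.mpr fun T hT => (h T hT).2.2.1 ε (Set.mem_sInter.mp hε T hT)
  · intro ε hε ε' hsub hdiag
    exact Set.mem_sInter.mpr fun T hT =>
      (h T hT).2.2.2 ε (Set.mem_sInter.mp hε T hT) ε' hsub hdiag

lemma sInter_coarseGroup' [Group F] (S : Set (Set (Set (F × F))))
    (h : ∀ T ∈ S, IsCoarseStructure T ∧ IsCoarseGroup T) :
    IsCoarseGroup (⋂₀ S) := by
  constructor
  · rintro η ⟨hdiag, ε, hε, δ, hδ, hsub⟩
    refine ⟨{q : F × F | q.1 = q.2 ∨ ∃ p ∈ η, q = (p.1.1 * p.1.2, p.2.1 * p.2.2)}, ?_, ?_⟩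
    · refine Set.mem_sInter.mpr fun T hT => ?_
      obtain ⟨hCS, hCG⟩ := h T hT
      obtain ⟨δT, hδT, himg⟩ := hCG.1 η
        ⟨hdiag, ε, Set.mem_sInter.mp hε T hT, δ, Set.mem_sInter.mp hδ T hT, hsub⟩
      refine hCS.2.2.2 δT hδT _ ?_ (fun x => Or.inl rfl)
      rintro ⟨a, b⟩ (hq | ⟨p, hp, hpq⟩)
      · simp only [Set.mem_setOf_eq] at hq ⊢
        cases hq
        exact hCS.1 δT hδT a
      · rw [hpq]; exact himg p hp
    · intro p hp; exact Or.inr ⟨p, hp, rfl⟩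
  · intro ε hε
    refine ⟨{q : F × F | q.1 = q.2 ∨ ∃ p ∈ ε, q = (p.1⁻¹, p.2⁻¹)}, ?_, ?_⟩
    · refine Set.mem_sInter.mpr fun T hT => ?_
      obtain ⟨hCS, hCG⟩ := h T hT
      obtain ⟨δT, hδT, himg⟩ := hCG.2 ε (Set.mem_sInter.mp hε T hT)
      refine hCS.2.2.2 δT hδT _ ?_ (fun x => Or.inl rfl)
      rintro ⟨a, b⟩ (hq | ⟨p, hp, hpq⟩)
      · simp only [Set.mem_setOf_eq] at hq ⊢
        cases hq
        exact hCS.1 δT hδT a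
      · rw [hpq]; exact himg p hp
    · intro p hp; exact Or.inr ⟨p, hp, rfl⟩

/-- Pullback of a coarse structure along a map. -/
def pullbackCoarse {G : Type*} (h : F → G) (EG : Set (Set (G × G))) :
    Set (Set (F × F)) :=
  {ε | (∀ x : F, (x, x) ∈ ε) ∧ ∃ δ ∈ EG, ∀ p ∈ ε, (h p.1, h p.2) ∈ δ}

lemma pullback_coarseStructure {G : Type*} (h : F → G) (EG : Set (Set (G × G)))
    (hEG : IsCoarseStructure EG) : IsCoarseStructure (pullbackCoarse h EG) := by
  obtain ⟨hd, hcomp, hinv, hsubs⟩ := hEG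
  refine ⟨?_, ?_, ?_, ?_⟩
  · rintro ε ⟨hdiag, -⟩ x; exact hdiag x
  · rintro ε ⟨hd1, δ₁, hδ₁, hm1⟩ δ ⟨hd2, δ₂, hδ₂, hm2⟩
    refine ⟨fun x => ⟨x, hd1 x, hd2 x⟩,
      {q : G × G | ∃ z : G, (q.1, z) ∈ δ₁ ∧ (z, q.2) ∈ δ₂}, hcomp δ₁ hδ₁ δ₂ hδ₂, ?_⟩
    rintro p ⟨z, hz1, hz2⟩
    exact ⟨h z, hm1 _ hz1, hm2 _ hz2⟩
  · rintro ε ⟨hdiag, δ, hδ, hm⟩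
    exact ⟨fun x => hdiag x, {q : G × G | (q.2, q.1) ∈ δ}, hinv δ hδ,
      fun p hp => hm (p.2, p.1) hp⟩
  · rintro ε ⟨-, δ, hδ, hm⟩ ε' hsub hdiag
    exact ⟨hdiag, δ, hδ, fun p hp => hm p (hsub hp)⟩

lemma pullback_coarseGroup {G : Type*} [Group F] [Group G] (h : F →* G)
    (EG : Set (Set (G × G))) (hEG : IsCoarseStructure EG) (hCG : IsCoarseGroup EG) :
    IsCoarseGroup (pullbackCoarse (h : F → G) EG) := by
  constructor
  · rintro η ⟨hdiag, ε, ⟨hd1, δ₁, hδ₁, hm1⟩, δ, ⟨hd2, δ₂, hδ₂, hm2⟩, hsub⟩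
    obtain ⟨δs, hδs, hmul⟩ := hCG.1
      {p : (G × G) × (G × G) | (p.1.1, p.2.1) ∈ δ₁ ∧ (p.1.2, p.2.2) ∈ δ₂}
      ⟨fun q => ⟨hEG.1 δ₁ hδ₁ q.1, hEG.1 δ₂ hδ₂ q.2⟩, δ₁, hδ₁, δ₂, hδ₂, subset_rfl⟩
    refine ⟨{q : F × F | q.1 = q.2 ∨ ∃ p ∈ η, q = (p.1.1 * p.1.2, p.2.1 * p.2.2)},
      ⟨fun x => Or.inl rfl, δs, hδs, ?_⟩, fun p hp => Or.inr ⟨p, hp, rfl⟩⟩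
    rintro ⟨a, b⟩ (hq | ⟨p, hp, hpq⟩)
    · simp only [Set.mem_setOf_eq] at hq
      cases hq
      exact hEG.1 δs hδs (h a)
    · have hs := hsub hp
      have h1 := hm1 (p.1.1, p.2.1) hs.1
      have h2 := hm2 (p.1.2, p.2.2) hs.2
      have hmm := hmul ((h p.1.1, h p.1.2), (h p.2.1, h p.2.2)) ⟨h1, h2⟩
      rw [hpq]
      simpa [map_mul] using hmm
  · rintro ε ⟨hdiag, δ, hδ, hm⟩
    obtain ⟨δ', hδ', hinv⟩ := hCG.2 δ hδ
    refine ⟨{q : F × F | q.1 = q.2 ∨ ∃ p ∈ ε, q = (p.1⁻¹, p.2⁻¹)},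
      ⟨fun x => Or.inl rfl, δ', hδ', ?_⟩, fun p hp => Or.inr ⟨p, hp, rfl⟩⟩
    rintro ⟨a, b⟩ (hq | ⟨p, hp, hpq⟩)
    · simp only [Set.mem_setOf_eq] at hq
      cases hq
      exact hEG.1 δ' hδ' (h a)
    · have hii := hinv (h p.1, h p.2) (hm p hp)
      rw [hpq]
      simpa [map_inv] using hii

/-- The canonical entourage on `F` induced by an entourage `e` on `X ⊆ F`. -/
def eStar (X : Set F) (e : Set (↥X × ↥X)) : Set (F × F) :=
  {q | q.1 = q.2 ∨ ∃ x y : X, (x, y) ∈ e ∧ q = ((x : F), (y : F))}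

lemma eStar_mem {X : Set F} {E : Set (Set (↥X × ↥X))} {e : Set (↥X × ↥X)}
    (he : e ∈ E) {T : Set (Set (F × F))} (hT : IsCoarseStructure T)
    (hres : restrictCoarse T X = E) : eStar X e ∈ T := by
  have hmem : e ∈ restrictCoarse T X := by rw [hres]; exact he
  obtain ⟨ε, hε, hεe⟩ := hmem
  refine hT.2.2.2 ε hε _ ?_ (fun x => Or.inl rfl)
  rintro ⟨a, b⟩ (hq | ⟨x, y, hxy, hpq⟩)
  · simp only [Set.mem_setOf_eq] at hq
    cases hq
    exact hT.1 ε hε a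
  · rw [hεe] at hxy
    rw [hpq]
    exact hxy

lemma eStar_restrict {X : Set F} {E : Set (Set (↥X × ↥X))}
    (hE : IsCoarseStructure E) {e : Set (↥X × ↥X)} (he : e ∈ E) :
    e = {q : ↥X × ↥X | ((q.1 : F), (q.2 : F)) ∈ eStar X e} := by
  ext ⟨x, y⟩
  constructor
  · intro hxy
    exact Or.inr ⟨x, y, hxy, rfl⟩
  · rintro (hq | ⟨x', y', hxy, hpq⟩)
    · simp only [Set.mem_setOf_eq] at hq
      have : x = y := Subtype.ext hq
      subst this
      exact hE.1 e he x
    · have h1 : (x : F) = (x' : F) := congrArg Prod.fst hpq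
      have h2 : (y : F) = (y' : F) := congrArg Prod.snd hpq
      have e1 : x = x' := Subtype.ext h1
      have e2 : y = y' := Subtype.ext h2
      rw [e1, e2]
      exact hxy

end FreeCoarseAux

/-- Lemma 1: if some group coarse structure on the `M`-free group `F` over `X`
restricts to `E` on `X`, then the intersection `T'` of the family `𝔉` of all such
structures is a group coarse structure restricting to `E`, every coarse map from
`(X, E)` to a coarse group `G ∈ M` extends to a coarse homomorphism from `(F, T')`,
and the structure with these properties is unique: the free coarse group exists. -/
theorem free_coarse_group_exists {F : Type u} [Group F] (X : Set F)
    (M : (G : Type u) → Group G → Prop)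
    (hMnt : ∃ (G : Type u) (instG : Group G), M G instG ∧ Nontrivial G)
    (hMF : M F ‹Group F›)
    (hgen : Subgroup.closure X = ⊤)
    (hfree : ∀ (G : Type u) [instG : Group G], M G instG →
      ∀ f : X → G, ∃ h : F →* G, ∀ x : X, h x = f x)
    (E : Set (Set (X × X))) (hE : IsCoarseStructure E)
    (hne : ∃ T : Set (Set (F × F)), IsCoarseStructure T ∧ IsCoarseGroup T ∧
      restrictCoarse T X = E) :
    (IsCoarseStructure (⋂₀ {T : Set (Set (F × F)) |
        IsCoarseStructure T ∧ IsCoarseGroup T ∧ restrictCoarse T X = E}) ∧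
      IsCoarseGroup (⋂₀ {T : Set (Set (F × F)) |
        IsCoarseStructure T ∧ IsCoarseGroup T ∧ restrictCoarse T X = E}) ∧
      restrictCoarse (⋂₀ {T : Set (Set (F × F)) |
        IsCoarseStructure T ∧ IsCoarseGroup T ∧ restrictCoarse T X = E}) X = E) ∧
    (∀ (G : Type u) [instG : Group G], M G instG →
      ∀ EG : Set (Set (G × G)), IsCoarseStructure EG → IsCoarseGroup EG →
      ∀ f : X → G, IsCoarseMap E EG f →
      ∃ h : F →* G, (∀ x : X, h x = f x) ∧
        IsCoarseMap (⋂₀ {T : Set (Set (F × F)) |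
          IsCoarseStructure T ∧ IsCoarseGroup T ∧ restrictCoarse T X = E}) EG h) ∧
    (∀ T₁ T₂ : Set (Set (F × F)),
      (IsCoarseStructure T₁ ∧ IsCoarseGroup T₁ ∧ restrictCoarse T₁ X = E ∧
        ∀ (G : Type u) [instG : Group G], M G instG →
          ∀ EG : Set (Set (G × G)), IsCoarseStructure EG → IsCoarseGroup EG →
          ∀ f : X → G, IsCoarseMap E EG f →
          ∃ h : F →* G, (∀ x : X, h x = f x) ∧ IsCoarseMap T₁ EG h) →
      (IsCoarseStructure T₂ ∧ IsCoarseGroup T₂ ∧ restrictCoarse T₂ X = E ∧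
        ∀ (G : Type u) [instG : Group G], M G instG →
          ∀ EG : Set (Set (G × G)), IsCoarseStructure EG → IsCoarseGroup EG →
          ∀ f : X → G, IsCoarseMap E EG f →
          ∃ h : F →* G, (∀ x : X, h x = f x) ∧ IsCoarseMap T₂ EG h) →
      T₁ = T₂) := by
  obtain ⟨T₀, hT₀cs, hT₀cg, hT₀r⟩ := hne
  set 𝔉 : Set (Set (Set (F × F))) :=
    {T | IsCoarseStructure T ∧ IsCoarseGroup T ∧ restrictCoarse T X = E} with h𝔉
  have hT₀mem : T₀ ∈ 𝔉 := ⟨hT₀cs, hT₀cg, hT₀r⟩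
  have hcs : IsCoarseStructure (⋂₀ 𝔉) :=
    sInter_coarseStructure' 𝔉 ⟨T₀, hT₀mem⟩ fun T hT => hT.1
  have hcg : IsCoarseGroup (⋂₀ 𝔉) :=
    sInter_coarseGroup' 𝔉 fun T hT => ⟨hT.1, hT.2.1⟩
  have hr : restrictCoarse (⋂₀ 𝔉) X = E := by
    apply Set.Subset.antisymm
    · rintro s ⟨ε, hε, rfl⟩
      rw [← hT₀r]
      exact ⟨ε, Set.mem_sInter.mp hε T₀ hT₀mem, rfl⟩
    · intro e he
      exact ⟨eStar X e, Set.mem_sInter.mpr fun T hT => eStar_mem he hT.1 hT.2.2,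
        eStar_restrict hE he⟩
  refine ⟨⟨hcs, hcg, hr⟩, ?_, ?_⟩
  · intro G instG hMG EG hEGcs hEGcg f hf
    obtain ⟨h, hhx⟩ := hfree G hMG f
    have hPcs := pullback_coarseStructure (h : F → G) EG hEGcs
    have hPcg := pullback_coarseGroup h EG hEGcs hEGcg
    have hcs2 : IsCoarseStructure (T₀ ∩ pullbackCoarse (h : F → G) EG) := by
      have hh := sInter_coarseStructure' {T₀, pullbackCoarse (h : F → G) EG}
        ⟨T₀, Or.inl rfl⟩ ?_
      · rwa [Set.sInter_pair] at hh
      · rintro T (rfl | hT)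
        · exact hT₀cs
        · rw [Set.mem_singleton_iff] at hT
          subst hT
          exact hPcs
    have hcg2 : IsCoarseGroup (T₀ ∩ pullbackCoarse (h : F → G) EG) := by
      have hh := sInter_coarseGroup' {T₀, pullbackCoarse (h : F → G) EG} ?_
      · rwa [Set.sInter_pair] at hh
      · rintro T (rfl | hT)
        · exact ⟨hT₀cs, hT₀cg⟩
        · rw [Set.mem_singleton_iff] at hT
          subst hT
          exact ⟨hPcs, hPcg⟩
    have hr2 : restrictCoarse (T₀ ∩ pullbackCoarse (h : F → G) EG) X = E := by
      apply Set.Subset.antisymm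
      · rintro s ⟨ε, hε, rfl⟩
        rw [← hT₀r]
        exact ⟨ε, hε.1, rfl⟩
      · intro e he
        refine ⟨eStar X e, ⟨eStar_mem he hT₀cs hT₀r, ?_⟩, eStar_restrict hE he⟩
        obtain ⟨δ, hδ, hfm⟩ := hf e he
        refine ⟨fun x => Or.inl rfl, δ, hδ, ?_⟩
        rintro p (hq | ⟨x, y, hxy, hpq⟩)
        · show (h p.1, h p.2) ∈ δ
          rw [hq]
          exact hEGcs.1 δ hδ (h p.2)
        · show (h p.1, h p.2) ∈ δ
          rw [hpq]
          show (h x, h y) ∈ δ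
          rw [hhx x, hhx y]
          exact hfm (x, y) hxy
    have hpair : T₀ ∩ pullbackCoarse (h : F → G) EG ∈ 𝔉 := ⟨hcs2, hcg2, hr2⟩
    refine ⟨h, hhx, ?_⟩
    intro ε hε
    obtain ⟨-, δ, hδ, hm⟩ := (Set.mem_sInter.mp hε _ hpair).2
    exact ⟨δ, hδ, hm⟩
  · intro T₁ T₂ h₁ h₂
    have step : ∀ Ta Tb : Set (Set (F × F)), IsCoarseStructure Ta →
        (∀ (G : Type u) [instG : Group G], M G instG →
          ∀ EG : Set (Set (G × G)), IsCoarseStructure EG → IsCoarseGroup EG →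
          ∀ f : X → G, IsCoarseMap E EG f →
          ∃ h : F →* G, (∀ x : X, h x = f x) ∧ IsCoarseMap Ta EG h) →
        IsCoarseStructure Tb → IsCoarseGroup Tb → restrictCoarse Tb X = E →
        Ta ⊆ Tb := by
      intro Ta Tb hacs hau hbcs hbcg hbr
      have hincl : IsCoarseMap E Tb (fun x : X => (x : F)) := by
        intro e he
        rw [← hbr] at he
        obtain ⟨ε, hε, rfl⟩ := he
        exact ⟨ε, hε, fun p hp => hp⟩
      obtain ⟨h, hhx, hcm⟩ := hau F hMF Tb hbcs hbcg (fun x : X => (x : F)) hincl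
      have hid : ∀ g : F, h g = g := by
        have hle : Subgroup.closure X ≤ h.eqLocus (MonoidHom.id F) :=
          (Subgroup.closure_le _).mpr fun x hx => hhx ⟨x, hx⟩
        intro g
        have hgm : g ∈ Subgroup.closure X := by
          rw [hgen]
          exact Subgroup.mem_top g
        exact hle hgm
      intro ε hε
      obtain ⟨δ, hδ, hm⟩ := hcm ε hε
      refine hbcs.2.2.2 δ hδ ε ?_ (hacs.1 ε hε)
      intro p hp
      have hmp := hm p hp
      rwa [hid, hid] at hmp
    exact Set.Subset.antisymm
      (step T₁ T₂ h₁.1 h₁.2.2.2 h₂.1 h₂.2.1 h₂.2.2.1)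
      (step T₂ T₁ h₂.1 h₂.2.2.2 h₁.1 h₁.2.1 h₁.2.2.1)
end

section
/- If a coarse structure E on X has a countable base, then the coarse structure of the free coarse group F_M(X, E) also has a countable base (hence is metrizable). -/
/-- Auxiliary: iterated closure of a set under two binary and two unary operations. -/
def opCl {β : Type v} (f g : β → β → β) (u v : β → β) (s : Set β) : ℕ → Set β
  | 0 => s
  | k + 1 => opCl f g u v s k ∪ Set.image2 f (opCl f g u v s k) (opCl f g u v s k)
      ∪ Set.image2 g (opCl f g u v s k) (opCl f g u v s k)
      ∪ u '' opCl f g u v s k ∪ v '' opCl f g u v s k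

lemma opCl_subset_succ {β : Type v} (f g : β → β → β) (u v : β → β) (s : Set β) (k : ℕ) :
    opCl f g u v s k ⊆ opCl f g u v s (k + 1) :=
  fun x hx => Or.inl (Or.inl (Or.inl (Or.inl hx)))

lemma opCl_mono {β : Type v} (f g : β → β → β) (u v : β → β) (s : Set β) :
    ∀ {i j : ℕ}, i ≤ j → opCl f g u v s i ⊆ opCl f g u v s j := by
  intro i j hij
  induction hij with
  | refl => exact Set.Subset.rfl
  | step h ih => exact ih.trans (opCl_subset_succ f g u v s _)

lemma opCl_countable {β : Type v} (f g : β → β → β) (u v : β → β) (s : Set β)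
    (hs : s.Countable) : ∀ k : ℕ, (opCl f g u v s k).Countable := by
  intro k
  induction k with
  | zero => exact hs
  | succ k ih =>
      exact ((((ih.union (ih.image2 ih f)).union (ih.image2 ih g)).union
        (ih.image u)).union (ih.image v))

/-- If the coarse structure `E` on `X` has a countable base, then the coarse structure
`T'` of the free coarse group `F_M(X, E)` (the smallest group coarse structure on the
`M`-free group `F` over `X` restricting to `E`) also has a countable base, hence is
metrizable. -/
theorem free_coarse_group_metrizable {F : Type u} [Group F] (X : Set F)
    (M : (G : Type u) → Group G → Prop)
    (hMnt : ∃ (G : Type u) (instG : Group G), M G instG ∧ Nontrivial G)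
    (hMF : M F ‹Group F›)
    (hgen : Subgroup.closure X = ⊤)
    (hfree : ∀ (G : Type u) [instG : Group G], M G instG →
      ∀ f : X → G, ∃ h : F →* G, ∀ x : X, h x = f x)
    (E : Set (Set (X × X))) (hE : IsCoarseStructure E)
    (B : Set (Set (X × X))) (hBE : B ⊆ E) (hBcnt : B.Countable)
    (hBbase : ∀ ε ∈ E, ∃ b ∈ B, ε ⊆ b)
    (T' : Set (Set (F × F))) (hT'cs : IsCoarseStructure T')
    (hT'gr : IsCoarseGroup T') (hT'res : restrictCoarse T' X = E)
    (hT'min : ∀ T : Set (Set (F × F)), IsCoarseStructure T → IsCoarseGroup T →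
      restrictCoarse T X = E → T' ⊆ T) :
    ∃ B' : Set (Set (F × F)), B' ⊆ T' ∧ B'.Countable ∧ ∀ ε ∈ T', ∃ b ∈ B', ε ⊆ b := by
  classical
  obtain ⟨hdiagT', hcompT', htransT', hsubT'⟩ := hT'cs
  rcases B.eq_empty_or_nonempty with hBem | hBne
  · refine ⟨∅, by simp, Set.countable_empty, ?_⟩
    intro ε hε
    exfalso
    have hres : {q : X × X | ((q.1 : F), (q.2 : F)) ∈ ε} ∈ E := by
      rw [← hT'res]; exact ⟨ε, hε, rfl⟩
    obtain ⟨b, hb, -⟩ := hBbase _ hres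
    rw [hBem] at hb
    exact hb
  · obtain ⟨e, he⟩ := hBcnt.exists_eq_range hBne
    -- lifts of the base elements
    have hlift : ∀ k : ℕ, ∃ η ∈ T', e k = {q : X × X | ((q.1 : F), (q.2 : F)) ∈ η} := by
      intro k
      have hek : e k ∈ E := hBE (he ▸ Set.mem_range_self k)
      rw [← hT'res] at hek
      exact hek
    choose η hηT' hηres using hlift
    -- the four operations on entourages of F
    set compS : Set (F × F) → Set (F × F) → Set (F × F) :=
      fun q q' => {p : F × F | ∃ z : F, (p.1, z) ∈ q ∧ (z, p.2) ∈ q'} with hcompS_def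
    set transS : Set (F × F) → Set (F × F) :=
      fun q => {p : F × F | (p.2, p.1) ∈ q} with htransS_def
    have hmulEx : ∀ q ∈ T', ∀ q' ∈ T', ∃ ζ ∈ T',
        ∀ x y x' y' : F, (x, y) ∈ q → (x', y') ∈ q' → (x * x', y * y') ∈ ζ := by
      intro q hq q' hq'
      obtain ⟨δ, hδ, hδp⟩ := hT'gr.1
        {p : (F × F) × (F × F) | (p.1.1, p.2.1) ∈ q ∧ (p.1.2, p.2.2) ∈ q'}
        ⟨fun r => ⟨hdiagT' q hq r.1, hdiagT' q' hq' r.2⟩,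
         q, hq, q', hq', fun p hp => hp⟩
      exact ⟨δ, hδ, fun x y x' y' hxy hxy' => hδp ((x, x'), (y, y')) ⟨hxy, hxy'⟩⟩
    choose! mfun hmfunT' hmfunB using hmulEx
    have hinvEx : ∀ q ∈ T', ∃ δ ∈ T', ∀ x y : F, (x, y) ∈ q → (x⁻¹, y⁻¹) ∈ δ := by
      intro q hq
      obtain ⟨δ, hδ, hδp⟩ := hT'gr.2 q hq
      exact ⟨δ, hδ, fun x y h => hδp (x, y) h⟩
    choose! ifun hifunT' hifunB using hinvEx
    -- the countable closed family S
    set S : Set (Set (F × F)) := ⋃ k : ℕ, opCl compS mfun transS ifun (Set.range η) k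
      with hS_def
    have hScnt : S.Countable :=
      Set.countable_iUnion (opCl_countable _ _ _ _ _ (Set.countable_range η))
    have hSseed : ∀ k : ℕ, η k ∈ S :=
      fun k => Set.mem_iUnion.2 ⟨0, Set.mem_range_self k⟩
    have hSpair : ∀ q ∈ S, ∀ q' ∈ S, ∃ k, q ∈ opCl compS mfun transS ifun (Set.range η) k ∧
        q' ∈ opCl compS mfun transS ifun (Set.range η) k := by
      intro q hq q' hq'
      obtain ⟨i, hi⟩ := Set.mem_iUnion.1 hq
      obtain ⟨j, hj⟩ := Set.mem_iUnion.1 hq'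
      exact ⟨max i j, opCl_mono _ _ _ _ _ (le_max_left i j) hi,
        opCl_mono _ _ _ _ _ (le_max_right i j) hj⟩
    have hScomp : ∀ q ∈ S, ∀ q' ∈ S, compS q q' ∈ S := by
      intro q hq q' hq'
      obtain ⟨k, h1, h2⟩ := hSpair q hq q' hq'
      exact Set.mem_iUnion.2 ⟨k + 1,
        Or.inl (Or.inl (Or.inl (Or.inr (Set.mem_image2_of_mem h1 h2))))⟩
    have hSmul : ∀ q ∈ S, ∀ q' ∈ S, mfun q q' ∈ S := by
      intro q hq q' hq'
      obtain ⟨k, h1, h2⟩ := hSpair q hq q' hq'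
      exact Set.mem_iUnion.2 ⟨k + 1,
        Or.inl (Or.inl (Or.inr (Set.mem_image2_of_mem h1 h2)))⟩
    have hStrans : ∀ q ∈ S, transS q ∈ S := by
      intro q hq
      obtain ⟨i, hi⟩ := Set.mem_iUnion.1 hq
      exact Set.mem_iUnion.2 ⟨i + 1, Or.inl (Or.inr ⟨q, hi, rfl⟩)⟩
    have hSinv : ∀ q ∈ S, ifun q ∈ S := by
      intro q hq
      obtain ⟨i, hi⟩ := Set.mem_iUnion.1 hq
      exact Set.mem_iUnion.2 ⟨i + 1, Or.inr ⟨q, hi, rfl⟩⟩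
    -- S ⊆ T'
    have hST' : ∀ q ∈ S, q ∈ T' := by
      have : ∀ k, ∀ q ∈ opCl compS mfun transS ifun (Set.range η) k, q ∈ T' := by
        intro k
        induction k with
        | zero =>
            rintro q ⟨n, rfl⟩
            exact hηT' n
        | succ k ih =>
            rintro q (((( hq | hq) | hq) | hq) | hq)
            · exact ih q hq
            · obtain ⟨a, ha, b, hb, rfl⟩ := hq
              exact hcompT' a (ih a ha) b (ih b hb)
            · obtain ⟨a, ha, b, hb, rfl⟩ := hq
              exact hmfunT' a (ih a ha) b (ih b hb)
            · obtain ⟨a, ha, rfl⟩ := hq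
              exact htransT' a (ih a ha)
            · obtain ⟨a, ha, rfl⟩ := hq
              exact hifunT' a (ih a ha)
      intro q hq
      obtain ⟨i, hi⟩ := Set.mem_iUnion.1 hq
      exact this i q hi
    -- the candidate coarse structure T
    set T : Set (Set (F × F)) :=
      {ε : Set (F × F) | (∀ x : F, (x, x) ∈ ε) ∧ ∃ q ∈ S, ε ⊆ q} with hT_def
    have hTT' : ∀ ε ∈ T, ε ∈ T' := by
      rintro ε ⟨hd, q, hqS, hsub⟩
      exact hsubT' q (hST' q hqS) ε hsub hd
    have hST : ∀ q ∈ S, q ∈ T :=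
      fun q hq => ⟨fun x => hdiagT' q (hST' q hq) x, q, hq, Set.Subset.rfl⟩
    -- T is a coarse structure
    have hTcs : IsCoarseStructure T := by
      refine ⟨fun ε hε => hε.1, ?_, ?_, ?_⟩
      · rintro ε ⟨hεd, q, hqS, hεq⟩ δ ⟨hδd, q', hq'S, hδq'⟩
        refine ⟨fun x => ⟨x, hεd x, hδd x⟩, compS q q', hScomp q hqS q' hq'S, ?_⟩
        rintro p ⟨z, h1, h2⟩
        exact ⟨z, hεq h1, hδq' h2⟩
      · rintro ε ⟨hεd, q, hqS, hεq⟩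
        exact ⟨fun x => hεd x, transS q, hStrans q hqS, fun p hp => hεq hp⟩
      · rintro ε ⟨hεd, q, hqS, hεq⟩ ε' hsub hd
        exact ⟨hd, q, hqS, hsub.trans hεq⟩
    -- T is a coarse group structure
    have hTgr : IsCoarseGroup T := by
      constructor
      · rintro ηp ⟨hd, ε, hεT, δ, hδT, hsub⟩
        obtain ⟨-, q, hqS, hεq⟩ := hεT
        obtain ⟨-, q', hq'S, hδq'⟩ := hδT
        refine ⟨mfun q q', hST _ (hSmul q hqS q' hq'S), ?_⟩
        intro p hp
        have h := hsub hp
        exact hmfunB q (hST' q hqS) q' (hST' q' hq'S) p.1.1 p.2.1 p.1.2 p.2.2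
          (hεq h.1) (hδq' h.2)
      · rintro ε hεT
        obtain ⟨-, q, hqS, hεq⟩ := hεT
        refine ⟨ifun q, hST _ (hSinv q hqS), ?_⟩
        intro p hp
        exact hifunB q (hST' q hqS) p.1 p.2 (hεq hp)
    -- T restricts to E
    have hTres : restrictCoarse T X = E := by
      ext s
      constructor
      · rintro ⟨ε, hεT, rfl⟩
        rw [← hT'res]
        exact ⟨ε, hTT' ε hεT, rfl⟩
      · intro hs
        obtain ⟨b, hbB, hsb⟩ := hBbase s hs
        obtain ⟨k, hk⟩ : ∃ k : ℕ, e k = b := by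
          have : b ∈ Set.range e := he ▸ hbB
          obtain ⟨k, hk⟩ := this
          exact ⟨k, hk⟩
        set ζ : Set (F × F) :=
          {p : F × F | p.1 = p.2 ∨ ∃ r : X × X, r ∈ s ∧ p.1 = (r.1 : F) ∧ p.2 = (r.2 : F)}
          with hζ_def
        have hζη : ζ ⊆ η k := by
          rintro ⟨a, b'⟩ (heq | ⟨r, hr, h1, h2⟩)
          · simp only at heq
            subst heq
            exact hdiagT' (η k) (hηT' k) a
          · simp only at h1 h2
            subst h1; subst h2
            have hrb : r ∈ e k := hk ▸ hsb hr
            rw [hηres k] at hrb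
            exact hrb
        have hζT : ζ ∈ T := ⟨fun x => Or.inl rfl, η k, hSseed k, hζη⟩
        refine ⟨ζ, hζT, ?_⟩
        ext r
        constructor
        · intro hr
          exact Or.inr ⟨r, hr, rfl, rfl⟩
        · rintro (heq | ⟨r', hr', h1, h2⟩)
          · have hrr : r.1 = r.2 := Subtype.ext heq
            obtain ⟨a, b'⟩ := r
            simp only at hrr
            subst hrr
            exact hE.1 s hs a
          · have h1' : r.1 = r'.1 := Subtype.ext h1
            have h2' : r.2 = r'.2 := Subtype.ext h2
            obtain ⟨a, b'⟩ := r
            obtain ⟨a', b''⟩ := r'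
            simp only at h1' h2'
            subst h1'; subst h2'
            exact hr'
    -- conclude by minimality
    have hmin := hT'min T hTcs hTgr hTres
    refine ⟨S, fun q hq => hST' q hq, hScnt, ?_⟩
    intro ε hε
    obtain ⟨-, q, hqS, hεq⟩ := hmin hε
    exact ⟨q, hqS, hεq⟩
end
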